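/- Under hypothesis (S) and (B), for all integers j ≥ 1, a ≥ j and α ≥ 0 there exists C > 0 such that for all x' ∈ U', all ξ' ∈ ℝ^{n−1} and all (t, τ) ∈ ℝ²: |ω^{(j)}(t/⟨ξ'⟩)| · ⟨ξ'⟩^{α−a} · |(∂_{x_n}^{a−j} ∂_{ξ_n}^{α} φ)(x', t/⟨ξ'⟩, ξ', τ⟨ξ'⟩)| ≤ C ⟨t⟩^{1−a} ⟨τ⟩^{1−α}. (Estimate on the summands S_j, j ≥ 1, in part (P1) of the proof of Theorem 1.2; it uses that on the support of ω^{(j)}(t/⟨ξ'⟩) one has ⟨t⟩ ≤ 2⟨ξ'⟩ and ⟨ξ'⟩ ≤ 2⟨t⟩.) -/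

import Mathlib

noncomputable section

open Real MeasureTheory

/-- Japanese bracket of a real number: `⟨t⟩ = √(1+t²)`. -/
def jb (t : ℝ) : ℝ := Real.sqrt (1 + t ^ 2)

/-- Japanese bracket of a vector in `ℝᵏ` (Euclidean norm). -/
def jbV {k : ℕ} (v : Fin k → ℝ) : ℝ := Real.sqrt (1 + ∑ i, v i ^ 2)

/-- Japanese bracket of the full covariable `(ξ', ξₙ) ∈ ℝᵏ⁺¹`. -/
def jbP {k : ℕ} (v : Fin k → ℝ) (t : ℝ) : ℝ := Real.sqrt (1 + (∑ i, v i ^ 2) + t ^ 2)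

/-- Euclidean norm of a vector in `ℝᵏ`. -/
def enormV {k : ℕ} (v : Fin k → ℝ) : ℝ := Real.sqrt (∑ i, v i ^ 2)

/-- Euclidean norm of the full covariable `(ξ', ξₙ)`. -/
def enormP {k : ℕ} (v : Fin k → ℝ) (t : ℝ) : ℝ := Real.sqrt ((∑ i, v i ^ 2) + t ^ 2)

/-- Functions of `(x', xₙ, ξ', ξₙ)` with values in `E`. -/
abbrev Fn (k : ℕ) (E : Type*) := (Fin k → ℝ) → ℝ → (Fin k → ℝ) → ℝ → E

/-- The uncurried version of `f : Fn k E`. -/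
def Fn.unc {k : ℕ} {E : Type*} (f : Fn k E) :
    ((Fin k → ℝ) × ℝ × (Fin k → ℝ) × ℝ) → E :=
  fun p => f p.1 p.2.1 p.2.2.1 p.2.2.2

section Derivs

variable {k : ℕ} {E : Type*} [NormedAddCommGroup E] [NormedSpace ℝ E]

/-- Partial derivative in `xₙ`. -/
def Dxn (f : Fn k E) : Fn k E := fun x' xn ξ' ξn => deriv (fun t => f x' t ξ' ξn) xn

/-- Partial derivative in `ξₙ`. -/
def Dxin (f : Fn k E) : Fn k E := fun x' xn ξ' ξn => deriv (fun t => f x' xn ξ' t) ξn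

/-- Partial derivative in the `i`-th coordinate of `x'`. -/
def Dxp (i : Fin k) (f : Fn k E) : Fn k E :=
  fun x' xn ξ' ξn => deriv (fun t => f (Function.update x' i t) xn ξ' ξn) (x' i)

/-- Partial derivative in the `i`-th coordinate of `ξ'`. -/
def Dxip (i : Fin k) (f : Fn k E) : Fn k E :=
  fun x' xn ξ' ξn => deriv (fun t => f x' xn (Function.update ξ' i t) ξn) (ξ' i)

/-- Multi-index partial derivative `∂ₓ'^β`. -/
def DxpM (β : Fin k → ℕ) (f : Fn k E) : Fn k E :=
  (List.finRange k).foldr (fun i g => (Dxp i)^[β i] g) f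

/-- Multi-index partial derivative `∂_ξ'^α`. -/
def DxipM (α : Fin k → ℕ) (f : Fn k E) : Fn k E :=
  (List.finRange k).foldr (fun i g => (Dxip i)^[α i] g) f

/-- Partial derivative in the first of two real variables. -/
def D1 (F : ℝ → ℝ → E) : ℝ → ℝ → E := fun s t => deriv (fun u => F u t) s

/-- Partial derivative in the second of two real variables. -/
def D2 (F : ℝ → ℝ → E) : ℝ → ℝ → E := fun s t => deriv (fun u => F s u) t

end Derivs

/-- The cut-off function `ω`: smooth, even, non-increasing on `[0,∞)`,
`≡ 1` on `[-1/2,1/2]`, `≡ 0` outside `(-1,1)`. -/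
def CutOff (ω : ℝ → ℝ) : Prop :=
  ContDiff ℝ (⊤ : ℕ∞) ω ∧ (∀ t, ω (-t) = ω t) ∧ AntitoneOn ω (Set.Ici 0) ∧
    (∀ t : ℝ, |t| ≤ 1 / 2 → ω t = 1) ∧ (∀ t : ℝ, 1 ≤ |t| → ω t = 0)

/-- `φ := ψ − ψ_∂`, where `ψ_∂(x',ξ') = ψ(x',0,ξ',0)`. -/
def phiOf {k : ℕ} (ψ : Fn k ℝ) : Fn k ℝ :=
  fun x' xn ξ' ξn => ψ x' xn ξ' ξn - ψ x' 0 ξ' 0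

/-- Hypothesis (S): symbol estimates of order `1` for `ψ`, for `x' ∈ Ω'`, `|xₙ| ≤ 2`. -/
def HypS {k : ℕ} (Ω' : Set (Fin k → ℝ)) (ψ : Fn k ℝ) : Prop :=
  ∀ (a b : ℕ) (α β : Fin k → ℕ), ∃ C > 0, ∀ x' ∈ Ω', ∀ xn : ℝ, |xn| ≤ 2 →
    ∀ (ξ' : Fin k → ℝ) (ξn : ℝ),
      |DxpM β ((Dxn)^[b] (DxipM α ((Dxin)^[a] ψ))) x' xn ξ' ξn| ≤
        C * jbP ξ' ξn ^ ((1 : ℝ) - ((a : ℝ) + ∑ i, (α i : ℝ)))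

/-- Hypothesis (B): `∂_{ξₙ}ψ(x',0,ξ',ξₙ) = 0` for `x' ∈ Ω'`. -/
def HypB {k : ℕ} (Ω' : Set (Fin k → ℝ)) (ψ : Fn k ℝ) : Prop :=
  ∀ x' ∈ Ω', ∀ (ξ' : Fin k → ℝ) (ξn : ℝ), Dxin ψ x' 0 ξ' ξn = 0

/-- The rescaled phase function `*Φ`. -/
def PhiS {k : ℕ} (ω : ℝ → ℝ) (K : ℝ) (ψ : Fn k ℝ) (x' ξ' : Fin k → ℝ) (t τ : ℝ) : ℝ :=
  ω (t / jbV ξ') * phiOf ψ x' (t / jbV ξ') ξ' (τ * jbV ξ')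
    + (1 - ω (t / jbV ξ')) * K * t * τ

/-!
On the support of `ω^{(j)}(t/⟨ξ'⟩)` one has `|t| ≤ ⟨ξ'⟩`, hence `⟨t⟩ ≤ √2 ⟨ξ'⟩`. Hypothesis (S),
applied at the point `(x', t/⟨ξ'⟩, ξ', τ⟨ξ'⟩)` whose covariable has bracket `⟨ξ'⟩⟨τ⟩`, bounds the
derivative of `φ` by `⟨ξ'⟩^{1-α} ⟨τ⟩^{1-α}`. Together with the factor `⟨ξ'⟩^{α-a}` this leaves
`⟨ξ'⟩^{1-a}`, and since `1 - a ≤ 0` it is controlled by `⟨t⟩^{1-a}`.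
-/

lemma jb_pos (t : ℝ) : 0 < jb t :=
  Real.sqrt_pos.2 (by positivity)

lemma one_le_jbV {k : ℕ} (v : Fin k → ℝ) : 1 ≤ jbV v :=
  Real.one_le_sqrt.2 (le_add_of_nonneg_right (Finset.sum_nonneg fun i _ => sq_nonneg (v i)))

lemma jbV_pos {k : ℕ} (v : Fin k → ℝ) : 0 < jbV v :=
  one_pos.trans_le (one_le_jbV v)

lemma jbP_zero_le {k : ℕ} (v : Fin k → ℝ) (t : ℝ) : jbP v 0 ≤ jbP v t :=
  Real.sqrt_le_sqrt (by nlinarith [sq_nonneg t])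

lemma jbP_mul_jbV {k : ℕ} (v : Fin k → ℝ) (τ : ℝ) : jbP v (τ * jbV v) = jbV v * jb τ := by
  have h0 : (0 : ℝ) ≤ 1 + ∑ i, v i ^ 2 := by positivity
  rw [jbP, jbV, jb, ← Real.sqrt_mul h0, mul_pow, Real.sq_sqrt h0]
  ring_nf

lemma jb_le_sqrt_two_mul {t L : ℝ} (ht : |t| ≤ L) (hL : 1 ≤ L) : jb t ≤ √2 * L := by
  have ht2 : t ^ 2 ≤ L ^ 2 := sq_le_sq' (abs_le.1 ht).1 (abs_le.1 ht).2
  calc jb t ≤ √(2 * L ^ 2) := Real.sqrt_le_sqrt (by nlinarith)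
    _ = √2 * L := by rw [Real.sqrt_mul zero_le_two, Real.sqrt_sq (by linarith)]

lemma rpow_le_mul_rpow_of_le_mul {x y c p : ℝ} (hx : 0 < x) (hc : 0 < c) (hxy : x ≤ c * y)
    (hp : p ≤ 0) : y ^ p ≤ c ^ (-p) * x ^ p := by
  have hy : 0 < y := pos_of_mul_pos_right (hx.trans_le hxy) hc.le
  calc y ^ p = c ^ (-p) * (c * y) ^ p := by
        rw [Real.mul_rpow hc.le hy.le, ← mul_assoc, ← Real.rpow_add hc, neg_add_cancel,
          Real.rpow_zero, one_mul]
    _ ≤ c ^ (-p) * x ^ p :=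
        mul_le_mul_of_nonneg_left (Real.rpow_le_rpow_of_nonpos hx hxy hp) (by positivity)

lemma List.foldr_iterate_zero {α β : Type*} (F : α → β → β) (l : List α) (f : β) :
    l.foldr (fun i g => (F i)^[0] g) f = f := by
  induction l with
  | nil => rfl
  | cons i l ih => exact ih

section Derivatives

variable {k : ℕ} {E : Type*} [NormedAddCommGroup E] [NormedSpace ℝ E]

@[simp]
lemma DxpM_zero (f : Fn k E) : DxpM (fun _ => 0) f = f :=
  List.foldr_iterate_zero _ _ f

@[simp]
lemma DxipM_zero (f : Fn k E) : DxipM (fun _ => 0) f = f :=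
  List.foldr_iterate_zero _ _ f

end Derivatives

lemma Dxn_phiOf {k : ℕ} (ψ : Fn k ℝ) : Dxn (phiOf ψ) = Dxn ψ := by
  funext x' xn ξ' ξn
  exact deriv_sub_const _

lemma Dxin_phiOf {k : ℕ} (ψ : Fn k ℝ) : Dxin (phiOf ψ) = Dxin ψ := by
  funext x' xn ξ' ξn
  exact deriv_sub_const _

lemma iterate_Dxn_iterate_Dxin_phiOf {k : ℕ} (ψ : Fn k ℝ) {b α : ℕ} (h : b ≠ 0 ∨ α ≠ 0) :
    Dxn^[b] (Dxin^[α] (phiOf ψ)) = Dxn^[b] (Dxin^[α] ψ) := by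
  obtain ⟨b, rfl⟩ | ⟨α, rfl⟩ := h.imp Nat.exists_eq_succ_of_ne_zero Nat.exists_eq_succ_of_ne_zero
  · rcases α with _ | α
    · simp only [Function.iterate_zero, id_eq, Function.iterate_succ_apply, Dxn_phiOf]
    · simp only [Function.iterate_succ_apply, Dxin_phiOf]
  · simp only [Function.iterate_succ_apply, Dxin_phiOf]

namespace HypS

variable {k : ℕ} {Ω' : Set (Fin k → ℝ)} {ψ : Fn k ℝ}

lemma exists_iterate_bound (hS : HypS Ω' ψ) (b α : ℕ) :
    ∃ C > 0, ∀ x' ∈ Ω', ∀ xn : ℝ, |xn| ≤ 2 → ∀ (ξ' : Fin k → ℝ) (ξn : ℝ),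
      |Dxn^[b] (Dxin^[α] ψ) x' xn ξ' ξn| ≤ C * jbP ξ' ξn ^ ((1 : ℝ) - α) := by
  obtain ⟨C, hC, hbound⟩ := hS α b (fun _ => 0) (fun _ => 0)
  refine ⟨C, hC, fun x' hx' xn hxn ξ' ξn => ?_⟩
  simpa using hbound x' hx' xn hxn ξ' ξn

lemma exists_iterate_phiOf_bound (hS : HypS Ω' ψ) (b α : ℕ) :
    ∃ C > 0, ∀ x' ∈ Ω', ∀ xn : ℝ, |xn| ≤ 2 → ∀ (ξ' : Fin k → ℝ) (ξn : ℝ),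
      |Dxn^[b] (Dxin^[α] (phiOf ψ)) x' xn ξ' ξn| ≤ C * jbP ξ' ξn ^ ((1 : ℝ) - α) := by
  by_cases h : b ≠ 0 ∨ α ≠ 0
  · simpa only [iterate_Dxn_iterate_Dxin_phiOf ψ h] using hS.exists_iterate_bound b α
  obtain ⟨rfl, rfl⟩ : b = 0 ∧ α = 0 := by tauto
  obtain ⟨C, hC, hbound⟩ := hS.exists_iterate_bound 0 0
  refine ⟨2 * C, by positivity, fun x' hx' xn hxn ξ' ξn => ?_⟩
  have hxn := hbound x' hx' xn hxn ξ' ξn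
  have h0 := hbound x' hx' 0 (by norm_num) ξ' 0
  have hmono := mul_le_mul_of_nonneg_left (jbP_zero_le ξ' ξn) hC.le
  simp only [Function.iterate_zero, id_eq, Nat.cast_zero, sub_zero, Real.rpow_one] at hxn h0 ⊢
  calc |phiOf ψ x' xn ξ' ξn| ≤ |ψ x' xn ξ' ξn| + |ψ x' 0 ξ' 0| := abs_sub _ _
    _ ≤ 2 * C * jbP ξ' ξn := by linarith

end HypS

section CutOffDerivatives

variable {ω : ℝ → ℝ}

lemma iteratedDeriv_eq_zero_of_one_lt_abs (hω0 : ∀ t : ℝ, 1 ≤ |t| → ω t = 0) (j : ℕ) {s : ℝ}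
    (hs : 1 < |s|) : iteratedDeriv j ω s = 0 := by
  have hev : ω =ᶠ[nhds s] fun _ => 0 :=
    Filter.eventually_of_mem ((isOpen_lt continuous_const continuous_abs).mem_nhds hs)
      fun t ht => hω0 t (le_of_lt ht)
  rw [hev.iteratedDeriv_eq, iteratedDeriv_fun_const_zero]

lemma exists_abs_iteratedDeriv_le (hω : ContDiff ℝ (⊤ : ℕ∞) ω)
    (hω0 : ∀ t : ℝ, 1 ≤ |t| → ω t = 0) (j : ℕ) :
    ∃ M > 0, ∀ s, |iteratedDeriv j ω s| ≤ M := by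
  have hsupp : HasCompactSupport (iteratedDeriv j ω) :=
    HasCompactSupport.intro (isCompact_Icc (a := -1) (b := 1)) fun s hs =>
      iteratedDeriv_eq_zero_of_one_lt_abs hω0 j (by
        rw [Set.mem_Icc, ← abs_le] at hs; exact not_le.1 hs)
  obtain ⟨M, hM⟩ := (hω.continuous_iteratedDeriv j (by exact_mod_cast le_top)
    ).bounded_above_of_compact_support hsupp
  exact ⟨max M 1, by positivity, fun s => (hM s).trans (le_max_left _ _)⟩

end CutOffDerivatives

theorem statement17_general {n : ℕ}
    (Ω' : Set (Fin (n - 1) → ℝ))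
    (U' : Set (Fin (n - 1) → ℝ)) (hUΩ : U' ⊆ Ω')
    (ψ : Fn (n - 1) ℝ)
    (hS : HypS Ω' ψ)
    (ω : ℝ → ℝ) (hω : CutOff ω) :
    ∀ j a α : ℕ, 1 ≤ j → j ≤ a → ∃ C > 0,
      ∀ x' ∈ U', ∀ (ξ' : Fin (n - 1) → ℝ) (t τ : ℝ),
        |iteratedDeriv j ω (t / jbV ξ')| * jbV ξ' ^ ((α : ℝ) - (a : ℝ)) *
            |(Dxn)^[a - j] ((Dxin)^[α] (phiOf ψ)) x' (t / jbV ξ') ξ' (τ * jbV ξ')| ≤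
          C * jb t ^ ((1 : ℝ) - (a : ℝ)) * jb τ ^ ((1 : ℝ) - (α : ℝ)) := by
  intro j a α hj hja
  obtain ⟨C₀, hC₀, hφ⟩ := hS.exists_iterate_phiOf_bound (a - j) α
  obtain ⟨M, hM, hωj⟩ := exists_abs_iteratedDeriv_le hω.1 hω.2.2.2.2 j
  refine ⟨M * C₀ * √2 ^ ((a : ℝ) - 1), by positivity, fun x' hx' ξ' t τ => ?_⟩
  have hL := jbV_pos ξ'
  have hτ := jb_pos τ
  have hτα : 0 ≤ jb τ ^ ((1 : ℝ) - α) := Real.rpow_nonneg hτ.le _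
  have htα : 0 ≤ jb t ^ ((1 : ℝ) - a) := Real.rpow_nonneg (jb_pos t).le _
  by_cases hs : |t / jbV ξ'| ≤ 1
  · have ht : jb t ≤ √2 * jbV ξ' := jb_le_sqrt_two_mul
      (by rwa [abs_div, abs_of_pos hL, div_le_one hL] at hs) (one_le_jbV ξ')
    have hLt : jbV ξ' ^ ((1 : ℝ) - a) ≤ √2 ^ ((a : ℝ) - 1) * jb t ^ ((1 : ℝ) - a) := by
      rw [← neg_sub (1 : ℝ) a]
      exact rpow_le_mul_rpow_of_le_mul (jb_pos t) (Real.sqrt_pos.2 two_pos) ht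
        (by linarith [show (1 : ℝ) ≤ a by exact_mod_cast hj.trans hja])
    have hφt := hφ x' (hUΩ hx') _ (hs.trans one_le_two) ξ' (τ * jbV ξ')
    rw [jbP_mul_jbV, Real.mul_rpow hL.le hτ.le] at hφt
    calc _ ≤ M * jbV ξ' ^ ((α : ℝ) - a) *
          (C₀ * (jbV ξ' ^ ((1 : ℝ) - α) * jb τ ^ ((1 : ℝ) - α))) := by
          gcongr
          exact hωj _
      _ = M * C₀ * jbV ξ' ^ ((1 : ℝ) - a) * jb τ ^ ((1 : ℝ) - α) := by
          rw [show (1 : ℝ) - a = (α - a) + (1 - α) by ring, Real.rpow_add hL]; ring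
      _ ≤ M * C₀ * (√2 ^ ((a : ℝ) - 1) * jb t ^ ((1 : ℝ) - a)) * jb τ ^ ((1 : ℝ) - α) := by
          gcongr
      _ = _ := by ring
  · rw [iteratedDeriv_eq_zero_of_one_lt_abs hω.2.2.2.2 j (not_le.1 hs), abs_zero, zero_mul,
      zero_mul]
    exact mul_nonneg (mul_nonneg (by positivity) htα) hτα

/-- Estimate on the summands `S_j`, `j ≥ 1`, in part (P1) of the proof of Theorem 1.2:
`|ω^{(j)}(t/⟨ξ'⟩)| ⟨ξ'⟩^{α-a} |(∂_{xₙ}^{a-j} ∂_{ξₙ}^α φ)(x', t/⟨ξ'⟩, ξ', τ⟨ξ'⟩)|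
≤ C ⟨t⟩^{1-a} ⟨τ⟩^{1-α}` uniformly for `x' ∈ U'`, `ξ' ∈ ℝ^{n-1}`. -/
theorem statement17 {n : ℕ} (hn : 2 ≤ n)
    (Ω' : Set (Fin (n - 1) → ℝ)) (hΩ' : IsOpen Ω')
    (U' : Set (Fin (n - 1) → ℝ)) (hU' : IsCompact U') (hUΩ : U' ⊆ Ω')
    (ψ : Fn (n - 1) ℝ) (hψ : ContDiff ℝ (⊤ : ℕ∞) (Fn.unc ψ))
    (hS : HypS Ω' ψ) (hB : HypB (Set.univ : Set (Fin (n - 1) → ℝ)) ψ)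
    (ω : ℝ → ℝ) (hω : CutOff ω) :
    ∀ j a α : ℕ, 1 ≤ j → j ≤ a → ∃ C > 0,
      ∀ x' ∈ U', ∀ (ξ' : Fin (n - 1) → ℝ) (t τ : ℝ),
        |iteratedDeriv j ω (t / jbV ξ')| * jbV ξ' ^ ((α : ℝ) - (a : ℝ)) *
            |(Dxn)^[a - j] ((Dxin)^[α] (phiOf ψ)) x' (t / jbV ξ') ξ' (τ * jbV ξ')| ≤
          C * jb t ^ ((1 : ℝ) - (a : ℝ)) * jb τ ^ ((1 : ℝ) - (α : ℝ)) :=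
  statement17_general Ω' U' hUΩ ψ hS ω hω
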